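/- A one-dimensional Mori domain has finite character: every nonzero element belongs to only finitely many maximal ideals. -/

import Mathlib

/-- The image of an ideal of `A` in its fraction field, as an `A`-submodule. -/
noncomputable def idealImage {A : Type*} [CommRing A] (J : Ideal A) :
    Submodule A (FractionRing A) :=
  Submodule.map (Algebra.linearMap A (FractionRing A)) J

/-- An ideal `J` is divisorial: `J ≠ 0` and `J = (A : (A : J))`. -/
noncomputable def IsDivisorial {A : Type*} [CommRing A] (J : Ideal A) : Prop :=
  J ≠ ⊥ ∧ idealImage J = 1 / (1 / idealImage J)

/-- A Mori domain: every ascending chain of divisorial ideals stabilizes. -/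
noncomputable def IsMoriDomain (A : Type*) [CommRing A] : Prop :=
  ∀ f : ℕ → Ideal A, Monotone f → (∀ n, IsDivisorial (f n)) →
    ∃ N, ∀ n, N ≤ n → f n = f N

/-!
If some divisorial ideal lay in infinitely many maximal ideals, the Mori condition would give a
maximal such `J`. Among the ideals `J : y` with `y ∉ J`, a maximal one `P` is prime, hence maximal
because it is nonzero and `dim R = 1`, and `J ⊊ J : P`. But `J : P` is again divisorial and lies in
every maximal ideal `M ≠ P` containing `J`, contradicting the choice of `J`. Finally apply this to
the divisorial ideal `rR`.
-/

open Submodule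

section OneDiv

variable {R A : Type*} [CommSemiring R] [CommSemiring A] [Algebra R A]

theorem Submodule.le_one_div_one_div (S : Submodule R A) : S ≤ 1 / (1 / S) :=
  le_div_iff.mpr fun x hx y hy => mul_comm x y ▸ hy x hx

theorem Submodule.one_div_antitone :
    Antitone fun S : Submodule R A => 1 / S :=
  fun _ _ h => le_div_iff.mpr fun _ hx _ hz => mem_div_iff_forall_mul_mem.mp hx _ (h hz)

theorem Submodule.one_div_one_div_one_div (S : Submodule R A) : 1 / (1 / (1 / S)) = 1 / S :=
  le_antisymm (one_div_antitone (le_one_div_one_div S)) (le_one_div_one_div _)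

end OneDiv

section Divisorial

variable {R : Type*} [CommRing R]

theorem algebraMap_mem_idealImage {J : Ideal R} {c : R} :
    algebraMap R (FractionRing R) c ∈ idealImage J ↔ c ∈ J :=
  ⟨fun ⟨_, hd, h⟩ => IsFractionRing.injective R (FractionRing R) h ▸ hd, fun h => ⟨c, h, rfl⟩⟩

theorem idealImage_le_one (J : Ideal R) : idealImage J ≤ 1 :=
  (IsLocalization.coeSubmodule_mono _ le_top).trans (IsLocalization.coeSubmodule_top _).le

theorem idealImage_mul (I J : Ideal R) : idealImage (I * J) = idealImage I * idealImage J :=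
  IsLocalization.coeSubmodule_mul (FractionRing R) I J

theorem isDivisorial_of_eq_one_div {J : Ideal R} (hJ : J ≠ ⊥) {H : Submodule R (FractionRing R)}
    (h : idealImage J = 1 / H) : IsDivisorial J :=
  ⟨hJ, by rw [h, one_div_one_div_one_div]⟩

theorem isDivisorial_span_singleton [IsDomain R] {x : R} (hx : x ≠ 0) :
    IsDivisorial (Ideal.span {x}) := by
  set u := algebraMap R (FractionRing R) x
  have hu : u ≠ 0 := (map_ne_zero_iff _ (IsFractionRing.injective R _)).mpr hx
  have hinv : u⁻¹ ∈ 1 / idealImage (Ideal.span {x}) := by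
    rintro _ ⟨c, hc, rfl⟩
    obtain ⟨d, rfl⟩ := Ideal.mem_span_singleton'.mp hc
    exact mem_one.mpr ⟨d, by simp only [Algebra.linearMap_apply, map_mul]; field_simp; rfl⟩
  refine ⟨by simpa using hx, (le_one_div_one_div _).antisymm fun z hz => ?_⟩
  obtain ⟨c, hc⟩ := mem_one.mp (hz _ hinv)
  have hz : z = algebraMap R (FractionRing R) (c * x) := by
    rw [map_mul, hc, inv_mul_cancel_right₀ hu]
  exact hz ▸ algebraMap_mem_idealImage.mpr
    (Ideal.mul_mem_left _ _ (Ideal.mem_span_singleton_self x))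

/-- As fractional ideals, `J : I = A : (I (A : J) + A)` when `J = A : (A : J)`. -/
theorem IsDivisorial.colon {J : Ideal R} (hJ : IsDivisorial J) (I : Ideal R) :
    IsDivisorial (J.colon I) := by
  refine isDivisorial_of_eq_one_div (ne_bot_of_le_ne_bot hJ.1 Ideal.le_colon)
    (H := idealImage I * (1 / idealImage J) ⊔ 1) (le_antisymm ?_ ?_)
  · rw [Submodule.le_div_iff_mul_le, Submodule.mul_sup, mul_one, ← mul_assoc]
    refine sup_le ((mul_le_mul_left ?_ _).trans mul_one_div_le_one) (idealImage_le_one _)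
    rw [← idealImage_mul]
    refine map_mono (Ideal.mul_le.mpr fun c hc i hi => ?_)
    simpa [smul_eq_mul] using Submodule.mem_colon.mp hc i hi
  · intro z hz
    obtain ⟨c, rfl⟩ := mem_one.mp (by simpa using hz 1 (mem_sup_right (one_le.mp le_rfl)))
    refine algebraMap_mem_idealImage.mpr (Submodule.mem_colon.mpr fun i hi => ?_)
    rw [smul_eq_mul, ← algebraMap_mem_idealImage, hJ.2]
    intro b hb
    simpa only [map_mul, mul_assoc] using
      hz _ (mem_sup_left (mul_mem_mul (algebraMap_mem_idealImage.mpr hi) hb))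

end Divisorial

theorem Ideal.isPrime_of_maximal_colon_singleton {R : Type*} [CommRing R] {J P : Ideal R}
    (hP : Maximal (· ∈ {I | ∃ y ∉ J, J.colon {y} = I}) P) : P.IsPrime := by
  obtain ⟨⟨y, hy, rfl⟩, hmax⟩ := hP
  have hmem {r z : R} : r ∈ J.colon {z} ↔ r * z ∈ J := Submodule.mem_colon_singleton
  refine ⟨fun h => hy (by simpa using hmem.mp (h ▸ Submodule.mem_top : (1 : R) ∈ J.colon {y})),
    fun {a b} hab => or_iff_not_imp_left.mpr fun ha => ?_⟩
  have hle : J.colon {y} ≤ J.colon {a * y} := fun z hz =>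
    hmem.mpr (by simpa only [mul_left_comm] using J.mul_mem_left a (hmem.mp hz))
  have hb : b ∈ J.colon {a * y} :=
    hmem.mpr (by simpa only [mul_left_comm, mul_assoc] using hmem.mp hab)
  exact hmax ⟨a * y, fun h => ha (hmem.mpr h), rfl⟩ hle hb

theorem Ideal.IsPrime.colon_le {R : Type*} [CommRing R] {J P M : Ideal R} (hM : M.IsPrime)
    (hJM : J ≤ M) (hPM : ¬P ≤ M) : J.colon P ≤ M := by
  obtain ⟨s, hsP, hsM⟩ := SetLike.not_le_iff_exists.mp hPM
  exact fun z hz => (hM.mem_or_mem (hJM (Submodule.mem_colon.mp hz s hsP))).resolve_right hsM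

namespace IsMoriDomain

variable {R : Type*} [CommRing R]

theorem wellFoundedGT (hR : IsMoriDomain R) : WellFoundedGT {J : Ideal R // IsDivisorial J} :=
  wellFoundedGT_iff_monotone_chain_condition.mpr fun a => by
    obtain ⟨N, hN⟩ := hR (fun n => (a n).1) (fun _ _ h => a.monotone h) (fun n => (a n).2)
    exact ⟨N, fun n hn => Subtype.ext (hN n hn).symm⟩

theorem exists_maximal (hR : IsMoriDomain R) {s : Set (Ideal R)}
    (hs : ∀ J ∈ s, IsDivisorial J) (hne : s.Nonempty) : ∃ J, Maximal (· ∈ s) J := by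
  have := hR.wellFoundedGT
  obtain ⟨J, hJ⟩ := hne
  obtain ⟨m, hm, hmin⟩ := wellFounded_gt.has_min {I : {J // IsDivisorial J} | I.1 ∈ s}
    ⟨⟨J, hs J hJ⟩, hJ⟩
  exact ⟨m, hm, fun I hI hle => not_lt_iff_le_imp_ge.mp (hmin ⟨I, hs I hI⟩ hI) hle⟩

theorem exists_isMaximal_lt_colon [IsDomain R] (hR : IsMoriDomain R) (hdim : ringKrullDim R ≤ 1)
    {J : Ideal R} (hJ : IsDivisorial J) (hJtop : J ≠ ⊤) :
    ∃ P : Ideal R, P.IsMaximal ∧ J < J.colon P := by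
  obtain ⟨P, hP⟩ := hR.exists_maximal (s := {I | ∃ y ∉ J, J.colon {y} = I})
    (by rintro _ ⟨y, -, rfl⟩; exact Ideal.colon_span (S := {y}) ▸ hJ.colon _)
    ⟨_, 1, (Ideal.ne_top_iff_one J).mp hJtop, rfl⟩
  have hPprime := Ideal.isPrime_of_maximal_colon_singleton hP
  obtain ⟨y, hy, rfl⟩ := hP.prop
  have : Ring.KrullDimLE 1 R := Ring.krullDimLE_iff.mpr hdim
  refine ⟨_, hPprime.isMaximal_of_ne_bot (ne_bot_of_le_ne_bot hJ.1 Ideal.le_colon),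
    Ideal.le_colon.lt_of_ne fun h => hy ?_⟩
  rw [h]
  exact Submodule.mem_colon.mpr fun p hp => by
    simpa [mul_comm] using Submodule.mem_colon_singleton.mp hp

theorem finite_setOf_isMaximal_le [IsDomain R] (hR : IsMoriDomain R) (hdim : ringKrullDim R ≤ 1)
    {J : Ideal R} (hJ : IsDivisorial J) : {M : Ideal R | M.IsMaximal ∧ J ≤ M}.Finite := by
  by_contra hinf
  obtain ⟨J, ⟨hJ, hJinf⟩, hJmax⟩ := hR.exists_maximal
    (s := {J | IsDivisorial J ∧ {M : Ideal R | M.IsMaximal ∧ J ≤ M}.Infinite}) (fun _ h => h.1)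
    ⟨J, hJ, hinf⟩
  obtain ⟨M₀, hM₀, hJM₀⟩ := hJinf.nonempty
  obtain ⟨P, hP, hJP⟩ := hR.exists_isMaximal_lt_colon hdim hJ (ne_top_of_le_ne_top hM₀.ne_top hJM₀)
  have hsub : {M : Ideal R | M.IsMaximal ∧ J ≤ M} \ {P} ⊆
      {M : Ideal R | M.IsMaximal ∧ J.colon P ≤ M} := fun M ⟨⟨hM, hJM⟩, hMP⟩ =>
    ⟨hM, hM.isPrime.colon_le hJM fun hPM => hMP (hP.eq_of_le hM.ne_top hPM).symm⟩
  exact hJP.not_ge (hJmax ⟨hJ.colon P, (hJinf.sdiff (Set.finite_singleton P)).mono hsub⟩ hJP.le)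

end IsMoriDomain

/-- A one-dimensional Mori domain has finite character. -/
theorem stmt_18 {R : Type*} [CommRing R] [IsDomain R]
    (hMori : IsMoriDomain R) (hdim : ringKrullDim R = 1) :
    ∀ r : R, r ≠ 0 → {M : Ideal R | M.IsMaximal ∧ r ∈ M}.Finite := by
  intro r hr
  simpa [Ideal.span_singleton_le_iff_mem] using
    hMori.finite_setOf_isMaximal_le hdim.le (isDivisorial_span_singleton hr)
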